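/- If V is a category with a strict initial object and finite products, then the categories V-Gph and V-Cat admit all small coproducts, and the forgetful functor U : V-Cat → V-Gph preserves small coproducts. -/

import Mathlib

set_option autoImplicit false

namespace Paper

open CategoryTheory Limits

universe w v u
/-- A small `V`-graph: a (small) type of objects together with hom-objects in `V`. -/
structure VGraph (V : Type u) [Category.{v} V] : Type (max u (v + 1)) where
  obj : Type v
  hom : obj → obj → V

namespace VGraph

variable {V : Type u} [Category.{v} V]

/-- A morphism of `V`-graphs. -/
structure Hom (G H : VGraph V) : Type v where
  obj : G.obj → H.obj
  map : ∀ x y : G.obj, G.hom x y ⟶ H.hom (obj x) (obj y)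

theorem Hom.ext' {G H : VGraph V} {f g : Hom G H}
    (h : f.obj = g.obj) (h' : HEq f.map g.map) : f = g := by
  obtain ⟨fo, fm⟩ := f
  obtain ⟨go, gm⟩ := g
  dsimp at h h'
  subst h
  have h2 := eq_of_heq h'
  subst h2
  rfl

/-- The category of small `V`-graphs. -/
instance category : Category.{v} (VGraph V) where
  Hom := VGraph.Hom
  id G := ⟨fun x => x, fun x y => 𝟙 (G.hom x y)⟩
  comp f g := ⟨fun x => g.obj (f.obj x), fun x y => f.map x y ≫ g.map (f.obj x) (f.obj y)⟩
  id_comp f := Hom.ext' rfl (heq_of_eq (by funext x y; simp))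
  comp_id f := Hom.ext' rfl (heq_of_eq (by funext x y; simp))
  assoc f g h := Hom.ext' rfl (heq_of_eq (by funext x y; simp))

end VGraph
/-- A small `V`-enriched category (enrichment with respect to the cartesian
monoidal structure of `V`). -/
structure VCat (V : Type u) [Category.{v} V] [HasFiniteProducts V] : Type (max u (v + 1)) where
  obj : Type v
  hom : obj → obj → V
  eid : ∀ x : obj, ⊤_ V ⟶ hom x x
  comp : ∀ x y z : obj, hom y z ⨯ hom x y ⟶ hom x z
  id_comp' : ∀ x y : obj,
    prod.lift (terminal.from (hom x y) ≫ eid y) (𝟙 (hom x y)) ≫ comp x y y = 𝟙 (hom x y)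
  comp_id' : ∀ x y : obj,
    prod.lift (𝟙 (hom x y)) (terminal.from (hom x y) ≫ eid x) ≫ comp x x y = 𝟙 (hom x y)
  assoc' : ∀ x y z w : obj,
    prod.map (comp y z w) (𝟙 (hom x y)) ≫ comp x y w =
      (prod.associator (hom z w) (hom y z) (hom x y)).hom ≫
        prod.map (𝟙 (hom z w)) (comp x y z) ≫ comp x z w

namespace VCat

variable {V : Type u} [Category.{v} V] [HasFiniteProducts V]

/-- A `V`-functor between small `V`-categories. -/
structure Hom (C D : VCat V) : Type v where
  obj : C.obj → D.obj
  map : ∀ x y : C.obj, C.hom x y ⟶ D.hom (obj x) (obj y)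
  map_eid : ∀ x : C.obj, C.eid x ≫ map x x = D.eid (obj x)
  map_comp : ∀ x y z : C.obj,
    C.comp x y z ≫ map x z = prod.map (map y z) (map x y) ≫ D.comp (obj x) (obj y) (obj z)

theorem Hom.ext' {C D : VCat V} {f g : Hom C D}
    (h : f.obj = g.obj) (h' : HEq f.map g.map) : f = g := by
  obtain ⟨fo, fm, _, _⟩ := f
  obtain ⟨go, gm, _, _⟩ := g
  dsimp at h h'
  subst h
  have h2 := eq_of_heq h'
  subst h2
  rfl

/-- The category of small `V`-categories and `V`-functors. -/
instance category : Category.{v} (VCat V) where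
  Hom := VCat.Hom
  id C :=
    { obj := fun x => x
      map := fun x y => 𝟙 (C.hom x y)
      map_eid := fun x => Category.comp_id _
      map_comp := fun x y z => by simp }
  comp f g :=
    { obj := fun x => g.obj (f.obj x)
      map := fun x y => f.map x y ≫ g.map (f.obj x) (f.obj y)
      map_eid := fun x => by rw [← Category.assoc, f.map_eid, g.map_eid]
      map_comp := fun x y z => by
        rw [← Category.assoc, f.map_comp, Category.assoc, g.map_comp,
          ← Category.assoc, prod.map_map] }
  id_comp f := Hom.ext' rfl (heq_of_eq (by funext x y; simp))
  comp_id f := Hom.ext' rfl (heq_of_eq (by funext x y; simp))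
  assoc f g h := Hom.ext' rfl (heq_of_eq (by funext x y; simp))

/-- The forgetful functor from small `V`-categories to small `V`-graphs. -/
def forgetToGraph (V : Type u) [Category.{v} V] [HasFiniteProducts V] :
    VCat V ⥤ VGraph V where
  obj C := ⟨C.obj, C.hom⟩
  map f := ⟨f.obj, f.map⟩
  map_id C := rfl
  map_comp f g := rfl

end VCat

section CoprodConstruction

open scoped Classical

variable {V : Type u} [Category.{v} V]

theorem eqToHom_self {C : Type*} [Category C] {X : C} (p : X = X) : eqToHom p = 𝟙 X := rfl

theorem cast_trans {I : Type v} {B : I → Type v} {i j k : I} (h1 : i = j) (h2 : j = k)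
    (x : B i) : (h1.trans h2) ▸ x = h2 ▸ h1 ▸ x := by subst h1; subst h2; rfl

section StrictInit
variable [HasInitial V] [HasStrictInitialObjects V] [HasFiniteProducts V]

noncomputable def prodInitL (A : V) {B : V} (hB : IsInitial B) : IsInitial (A ⨯ B) :=
  hB.ofIso (mulIsInitial A hB).symm

noncomputable def prodInitR (A : V) {B : V} (hB : IsInitial B) : IsInitial (B ⨯ A) :=
  hB.ofIso (isInitialMul A hB).symm

end StrictInit

section SH
variable [HasInitial V]
variable {I : Type v} (A : I → Type v) (H : ∀ i, A i → A i → V)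

noncomputable def sH : (Σ i, A i) → (Σ i, A i) → V := fun a b =>
  if h : a.1 = b.1 then H b.1 (h ▸ a.2) b.2 else ⊥_ V

theorem sH_eq {a b : Σ i, A i} (h : a.1 = b.1) : sH A H a b = H b.1 (h ▸ a.2) b.2 :=
  dif_pos h

theorem sH_same (i : I) (x y : A i) : sH A H ⟨i, x⟩ ⟨i, y⟩ = H i x y := dif_pos rfl

theorem sH_ne {a b : Σ i, A i} (h : ¬ a.1 = b.1) : sH A H a b = ⊥_ V := dif_neg h

noncomputable def sHInit {a b : Σ i, A i} (h : ¬ a.1 = b.1) : IsInitial (sH A H a b) :=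
  initialIsInitial.ofIso (eqToIso (sH_ne A H h)).symm

theorem H_cast {i j : I} (h : i = j) (x y : A i) : H i x y = H j (h ▸ x) (h ▸ y) := by
  subst h; rfl

theorem sH_ext {a b : Σ i, A i} (h : ¬ a.1 = b.1) {Z : V} (f g : sH A H a b ⟶ Z) :
    f = g := (sHInit A H h).hom_ext f g

theorem sH_eq_trans {a b c : Σ i, A i} (h1 : a.1 = b.1) (h2 : b.1 = c.1) :
    sH A H a c = H c.1 (h2 ▸ h1 ▸ a.2) c.2 := by
  obtain ⟨i, x⟩ := a; obtain ⟨j, y⟩ := b; obtain ⟨k, z⟩ := c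
  dsimp only at h1 h2
  subst h1; subst h2
  exact sH_same A H i x z

end SH

section SHExt
variable [HasFiniteProducts V] [HasInitial V] [HasStrictInitialObjects V]
variable {I : Type v} (A : I → Type v) (H : ∀ i, A i → A i → V)

theorem sH_ext_r {a b : Σ i, A i} (h : ¬ a.1 = b.1) {C Z : V}
    (f g : C ⨯ sH A H a b ⟶ Z) : f = g :=
  (prodInitL C (sHInit A H h)).hom_ext f g

theorem sH_ext_l {a b : Σ i, A i} (h : ¬ a.1 = b.1) {C Z : V}
    (f g : sH A H a b ⨯ C ⟶ Z) : f = g :=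
  (prodInitR C (sHInit A H h)).hom_ext f g

theorem sH_ext_rl {a b : Σ i, A i} (h : ¬ a.1 = b.1) {C D Z : V}
    (f g : (C ⨯ sH A H a b) ⨯ D ⟶ Z) : f = g :=
  (prodInitR D (prodInitL C (sHInit A H h))).hom_ext f g

theorem sH_ext_ll {a b : Σ i, A i} (h : ¬ a.1 = b.1) {C D Z : V}
    (f g : (sH A H a b ⨯ C) ⨯ D ⟶ Z) : f = g :=
  (prodInitR D (prodInitR C (sHInit A H h))).hom_ext f g

end SHExt

/-! ### Coproducts of `V`-graphs -/

section Graph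
variable [HasInitial V]
variable {I : Type v}

theorem VGraph.hom_congr {G K : VGraph V} {f g : G ⟶ K} (h : f = g) (x y : G.obj) :
    f.map x y = g.map x y ≫ eqToHom (by rw [h]) := by subst h; simp

variable (F : Discrete I ⥤ VGraph V)

/-- The coproduct `V`-graph of a family of `V`-graphs. -/
noncomputable def sGph : VGraph V :=
  ⟨Σ i, (F.obj ⟨i⟩).obj, sH (fun i => (F.obj ⟨i⟩).obj) (fun i => (F.obj ⟨i⟩).hom)⟩

noncomputable def gι (i : I) : F.obj ⟨i⟩ ⟶ sGph F :=
  ⟨fun x => ⟨i, x⟩, fun x y =>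
    eqToHom (sH_same (fun i => (F.obj ⟨i⟩).obj) (fun i => (F.obj ⟨i⟩).hom) i x y).symm⟩

noncomputable def gCocone : Cocone F where
  pt := sGph F
  ι := Discrete.natTrans fun i => gι F i.as

variable (s : Cocone F)

theorem gdescCast {a b : Σ i, (F.obj ⟨i⟩).obj} (h : a.1 = b.1) :
    s.pt.hom ((s.ι.app ⟨b.1⟩).obj (h ▸ a.2)) ((s.ι.app ⟨b.1⟩).obj b.2) =
      s.pt.hom ((s.ι.app ⟨a.1⟩).obj a.2) ((s.ι.app ⟨b.1⟩).obj b.2) := by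
  obtain ⟨i, x⟩ := a; obtain ⟨j, y⟩ := b
  dsimp only at h; subst h; rfl

noncomputable def gdescMap (a b : Σ i, (F.obj ⟨i⟩).obj) :
    sH (fun i => (F.obj ⟨i⟩).obj) (fun i => (F.obj ⟨i⟩).hom) a b ⟶
      s.pt.hom ((s.ι.app ⟨a.1⟩).obj a.2) ((s.ι.app ⟨b.1⟩).obj b.2) :=
  if h : a.1 = b.1 then
    eqToHom (sH_eq _ _ h) ≫ (s.ι.app ⟨b.1⟩).map (h ▸ a.2) b.2 ≫ eqToHom (gdescCast F s h)
  else (sHInit _ _ h).to _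

theorem gdescMap_same (i : I) (x y : (F.obj ⟨i⟩).obj) :
    gdescMap F s ⟨i, x⟩ ⟨i, y⟩ =
      eqToHom (sH_same (fun i => (F.obj ⟨i⟩).obj) (fun i => (F.obj ⟨i⟩).hom) i x y) ≫
        (s.ι.app ⟨i⟩).map x y := by
  simp only [gdescMap]
  rw [dif_pos trivial]
  rw [show eqToHom (gdescCast F s (a := ⟨i, x⟩) (b := ⟨i, y⟩) rfl) = 𝟙 _ from rfl]
  simp

noncomputable def gdesc : sGph F ⟶ s.pt :=
  ⟨fun a => (s.ι.app ⟨a.1⟩).obj a.2, gdescMap F s⟩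

noncomputable def gIsColimit : IsColimit (gCocone F) where
  desc s := gdesc F s
  fac s := by
    rintro ⟨i⟩
    refine VGraph.Hom.ext' rfl (heq_of_eq ?_)
    funext x y
    show eqToHom (sH_same (fun i => (F.obj ⟨i⟩).obj)
        (fun i => (F.obj ⟨i⟩).hom) i x y).symm ≫ gdescMap F s ⟨i, x⟩ ⟨i, y⟩
      = (s.ι.app ⟨i⟩).map x y
    rw [gdescMap_same]
    simp
  uniq s m w := by
    obtain ⟨mo, mm⟩ := m
    have hobj : mo = fun a : Σ i, (F.obj ⟨i⟩).obj => (s.ι.app ⟨a.1⟩).obj a.2 := by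
      funext a; obtain ⟨i, x⟩ := a
      exact congrFun (congrArg VGraph.Hom.obj (w ⟨i⟩)) x
    subst hobj
    refine VGraph.Hom.ext' rfl (heq_of_eq ?_)
    funext a b
    obtain ⟨i, x⟩ := a; obtain ⟨j, y⟩ := b
    by_cases h : i = j
    · subst h
      have hc : eqToHom (sH_same (fun i => (F.obj ⟨i⟩).obj)
            (fun i => (F.obj ⟨i⟩).hom) i x y).symm ≫ mm ⟨i, x⟩ ⟨i, y⟩
          = (s.ι.app ⟨i⟩).map x y ≫
            eqToHom (gdescCast F s (a := ⟨i, x⟩) (b := ⟨i, y⟩) rfl) :=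
        VGraph.hom_congr (w ⟨i⟩) x y
      show mm ⟨i, x⟩ ⟨i, y⟩ = gdescMap F s ⟨i, x⟩ ⟨i, y⟩
      rw [gdescMap_same]
      have h2 : mm ⟨i, x⟩ ⟨i, y⟩ =
          eqToHom (sH_same (fun i => (F.obj ⟨i⟩).obj) (fun i => (F.obj ⟨i⟩).hom) i x y) ≫
            eqToHom (sH_same (fun i => (F.obj ⟨i⟩).obj)
              (fun i => (F.obj ⟨i⟩).hom) i x y).symm ≫ mm ⟨i, x⟩ ⟨i, y⟩ := by
          exact (by intro A B Z p f; subst p; simp : ∀ {A B Z : V} (p : A = B) (f : A ⟶ Z),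
            f = eqToHom p ≫ eqToHom p.symm ≫ f) _ _
      rw [h2, hc, show eqToHom (gdescCast F s (a := ⟨i, x⟩) (b := ⟨i, y⟩) rfl) = 𝟙 _ from rfl]
      simp
      rfl
    · exact sH_ext (fun i => (F.obj ⟨i⟩).obj) (fun i => (F.obj ⟨i⟩).hom) h _ _

end Graph

/-! ### Coproducts of `V`-categories -/

section Cat
variable [HasFiniteProducts V] [HasInitial V] [HasStrictInitialObjects V]
variable {I : Type v}

theorem VCat.hom_congr {C D : VCat V} {f g : C ⟶ D} (h : f = g) (x y : C.obj) :
    f.map x y = g.map x y ≫ eqToHom (by rw [h]) := by subst h; simp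

variable (Y : I → VCat V)

noncomputable def sEid (a : Σ i, (Y i).obj) :
    ⊤_ V ⟶ sH (fun i => (Y i).obj) (fun i => (Y i).hom) a a :=
  (Y a.1).eid a.2 ≫ eqToHom (sH_eq (fun i => (Y i).obj) (fun i => (Y i).hom) rfl).symm

noncomputable def sComp (a b c : Σ i, (Y i).obj) :
    sH (fun i => (Y i).obj) (fun i => (Y i).hom) b c ⨯
        sH (fun i => (Y i).obj) (fun i => (Y i).hom) a b ⟶
      sH (fun i => (Y i).obj) (fun i => (Y i).hom) a c :=
  if h1 : a.1 = b.1 then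
    if h2 : b.1 = c.1 then
      prod.map (eqToHom (sH_eq _ _ h2))
          (eqToHom ((sH_eq _ _ h1).trans (H_cast _ (fun i => (Y i).hom) h2 _ _))) ≫
        (Y c.1).comp (h2 ▸ h1 ▸ a.2) (h2 ▸ b.2) c.2 ≫
        eqToHom (sH_eq_trans (fun i => (Y i).obj) (fun i => (Y i).hom) h1 h2).symm
    else (prodInitR _ (sHInit _ _ h2)).to _
  else (prodInitL _ (sHInit _ _ h1)).to _

theorem sComp_same (i : I) (x y z : (Y i).obj) :
    sComp Y ⟨i, x⟩ ⟨i, y⟩ ⟨i, z⟩ =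
      prod.map (eqToHom (sH_same (fun i => (Y i).obj) (fun i => (Y i).hom) i y z))
          (eqToHom (sH_same (fun i => (Y i).obj) (fun i => (Y i).hom) i x y)) ≫
        (Y i).comp x y z ≫
        eqToHom (sH_same (fun i => (Y i).obj) (fun i => (Y i).hom) i x z).symm := by
  simp only [sComp]
  rw [dif_pos trivial, dif_pos trivial]

theorem aux_id_comp (C : VCat V) {P Q : V} {x y : C.obj} (e e' : P = C.hom x y)
    (eY : Q = C.hom y y) :
    prod.lift (terminal.from P ≫ (C.eid y ≫ eqToHom eY.symm)) (𝟙 P) ≫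
      (prod.map (eqToHom eY) (eqToHom e) ≫ C.comp x y y ≫ eqToHom e'.symm) = 𝟙 P := by
  subst e; subst eY
  rw [show eqToHom e'.symm = 𝟙 _ from rfl]
  simpa using C.id_comp' x y

theorem aux_comp_id (C : VCat V) {P Q : V} {x y : C.obj} (e e' : P = C.hom x y)
    (eX : Q = C.hom x x) :
    prod.lift (𝟙 P) (terminal.from P ≫ (C.eid x ≫ eqToHom eX.symm)) ≫
      (prod.map (eqToHom e) (eqToHom eX) ≫ C.comp x x y ≫ eqToHom e'.symm) = 𝟙 P := by
  subst e; subst eX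
  rw [show eqToHom e'.symm = 𝟙 _ from rfl]
  simpa using C.comp_id' x y

theorem aux_assoc (C : VCat V) {Pzw Pyz Pxy Pyw Pxz Pxw : V} {x y z w : C.obj}
    (e1 : Pzw = C.hom z w) (e2 : Pyz = C.hom y z) (e3 : Pxy = C.hom x y)
    (e4 e4' : Pyw = C.hom y w) (e5 e5' : Pxz = C.hom x z) (e6 e6' : Pxw = C.hom x w) :
    prod.map (prod.map (eqToHom e1) (eqToHom e2) ≫ C.comp y z w ≫ eqToHom e4.symm)
        (𝟙 Pxy) ≫
      (prod.map (eqToHom e4') (eqToHom e3) ≫ C.comp x y w ≫ eqToHom e6.symm) =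
    (prod.associator Pzw Pyz Pxy).hom ≫
      prod.map (𝟙 Pzw)
        (prod.map (eqToHom e2) (eqToHom e3) ≫ C.comp x y z ≫ eqToHom e5.symm) ≫
      (prod.map (eqToHom e1) (eqToHom e5') ≫ C.comp x z w ≫ eqToHom e6'.symm) := by
  subst e1; subst e2; subst e3; subst e4; subst e5; subst e6
  rw [show eqToHom e4' = 𝟙 _ from rfl, show eqToHom e5' = 𝟙 _ from rfl,
    show eqToHom e6'.symm = 𝟙 _ from rfl]
  simp only [eqToHom_self, eqToHom_refl, prod.map_id_id, Category.comp_id, Category.id_comp]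
  simpa using C.assoc' x y z w

/-- The coproduct `V`-category of a family of `V`-categories. -/
noncomputable def sVCat : VCat V where
  obj := Σ i, (Y i).obj
  hom := sH (fun i => (Y i).obj) (fun i => (Y i).hom)
  eid := sEid Y
  comp := sComp Y
  id_comp' := by
    rintro ⟨i, x⟩ ⟨j, y⟩
    by_cases h : i = j
    · subst h
      rw [sComp_same]
      exact aux_id_comp (Y i) (sH_same (fun i => (Y i).obj) (fun i => (Y i).hom) i x y)
        (sH_same (fun i => (Y i).obj) (fun i => (Y i).hom) i x y) (sH_same (fun i => (Y i).obj) (fun i => (Y i).hom) i y y)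
    · exact sH_ext (fun i => (Y i).obj) (fun i => (Y i).hom) h _ _
  comp_id' := by
    rintro ⟨i, x⟩ ⟨j, y⟩
    by_cases h : i = j
    · subst h
      rw [sComp_same]
      exact aux_comp_id (Y i) (sH_same (fun i => (Y i).obj) (fun i => (Y i).hom) i x y)
        (sH_same (fun i => (Y i).obj) (fun i => (Y i).hom) i x y) (sH_same (fun i => (Y i).obj) (fun i => (Y i).hom) i x x)
    · exact sH_ext (fun i => (Y i).obj) (fun i => (Y i).hom) h _ _
  assoc' := by
    rintro ⟨i, x⟩ ⟨j, y⟩ ⟨k, z⟩ ⟨l, w⟩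
    by_cases h1 : i = j
    · subst h1
      by_cases h2 : i = k
      · subst h2
        by_cases h3 : i = l
        · subst h3
          simp only [sComp_same]
          exact aux_assoc (Y i) (sH_same (fun i => (Y i).obj) (fun i => (Y i).hom) i z w) (sH_same (fun i => (Y i).obj) (fun i => (Y i).hom) i y z)
            (sH_same (fun i => (Y i).obj) (fun i => (Y i).hom) i x y) (sH_same (fun i => (Y i).obj) (fun i => (Y i).hom) i y w) (sH_same (fun i => (Y i).obj) (fun i => (Y i).hom) i y w)
            (sH_same (fun i => (Y i).obj) (fun i => (Y i).hom) i x z) (sH_same (fun i => (Y i).obj) (fun i => (Y i).hom) i x z)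
            (sH_same (fun i => (Y i).obj) (fun i => (Y i).hom) i x w) (sH_same (fun i => (Y i).obj) (fun i => (Y i).hom) i x w)
        · exact sH_ext_ll (fun i => (Y i).obj) (fun i => (Y i).hom) h3 _ _
      · exact sH_ext_rl (fun i => (Y i).obj) (fun i => (Y i).hom) h2 _ _
    · exact sH_ext_r (fun i => (Y i).obj) (fun i => (Y i).hom) h1 _ _

noncomputable def vι (i : I) : Y i ⟶ sVCat Y where
  obj x := ⟨i, x⟩
  map x y := eqToHom (sH_same (fun i => (Y i).obj) (fun i => (Y i).hom) i x y).symm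
  map_eid x := rfl
  map_comp x y z := by
    show _ = _ ≫ sComp Y ⟨i, x⟩ ⟨i, y⟩ ⟨i, z⟩
    rw [sComp_same]
    exact (by intro A A' B B' Z W p q g h; subst p; subst q; simp : ∀ {A A' B B' Z W : V}
      (p : A = A') (q : B = B') (g : A ⨯ B ⟶ Z) (h : Z ⟶ W),
      g ≫ h = prod.map (eqToHom p) (eqToHom q) ≫
        prod.map (eqToHom p.symm) (eqToHom q.symm) ≫ g ≫ h) _ _ _ _

noncomputable def vCocone (F : Discrete I ⥤ VCat V) : Cocone F where
  pt := sVCat fun i => F.obj ⟨i⟩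
  ι := Discrete.natTrans fun i => vι (fun i => F.obj ⟨i⟩) i.as

section Desc
variable {Y}
variable (F : Discrete I ⥤ VCat V) (s : Cocone F)

theorem vdescCast {a b : Σ i, (F.obj ⟨i⟩).obj} (h : a.1 = b.1) :
    s.pt.hom ((s.ι.app ⟨b.1⟩).obj (h ▸ a.2)) ((s.ι.app ⟨b.1⟩).obj b.2) =
      s.pt.hom ((s.ι.app ⟨a.1⟩).obj a.2) ((s.ι.app ⟨b.1⟩).obj b.2) := by
  obtain ⟨i, x⟩ := a; obtain ⟨j, y⟩ := b
  dsimp only at h; subst h; rfl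

noncomputable def vdescMap (a b : Σ i, (F.obj ⟨i⟩).obj) :
    sH (fun i => (F.obj ⟨i⟩).obj) (fun i => (F.obj ⟨i⟩).hom) a b ⟶
      s.pt.hom ((s.ι.app ⟨a.1⟩).obj a.2) ((s.ι.app ⟨b.1⟩).obj b.2) :=
  if h : a.1 = b.1 then
    eqToHom (sH_eq _ _ h) ≫ (s.ι.app ⟨b.1⟩).map (h ▸ a.2) b.2 ≫ eqToHom (vdescCast F s h)
  else (sHInit _ _ h).to _

theorem vdescMap_same (i : I) (x y : (F.obj ⟨i⟩).obj) :
    vdescMap F s ⟨i, x⟩ ⟨i, y⟩ =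
      eqToHom (sH_same (fun i => (F.obj ⟨i⟩).obj) (fun i => (F.obj ⟨i⟩).hom) i x y) ≫
        (s.ι.app ⟨i⟩).map x y := by
  simp only [vdescMap]
  rw [dif_pos trivial]
  rw [show eqToHom (vdescCast F s (a := ⟨i, x⟩) (b := ⟨i, y⟩) rfl) = 𝟙 _ from rfl]
  simp

noncomputable def vdesc : sVCat (fun i => F.obj ⟨i⟩) ⟶ s.pt where
  obj a := (s.ι.app ⟨a.1⟩).obj a.2
  map := vdescMap F s
  map_eid := by
    rintro ⟨i, x⟩
    show sEid (fun i => F.obj ⟨i⟩) ⟨i, x⟩ ≫ vdescMap F s ⟨i, x⟩ ⟨i, x⟩ = _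
    rw [vdescMap_same, show sEid (fun i => F.obj ⟨i⟩) ⟨i, x⟩ =
      (F.obj ⟨i⟩).eid x ≫ eqToHom (sH_same (fun i => (F.obj ⟨i⟩).obj)
        (fun i => (F.obj ⟨i⟩).hom) i x x).symm from rfl]
    simp only [Category.assoc, eqToHom_trans, eqToHom_trans_assoc, eqToHom_self,
      eqToHom_refl, Category.id_comp, Category.comp_id]
    exact (s.ι.app ⟨i⟩).map_eid x
  map_comp := by
    rintro ⟨i, x⟩ ⟨j, y⟩ ⟨k, z⟩
    by_cases h1 : i = j
    · subst h1
      by_cases h2 : i = k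
      · subst h2
        show sComp (fun i => F.obj ⟨i⟩) ⟨i, x⟩ ⟨i, y⟩ ⟨i, z⟩ ≫ vdescMap F s ⟨i, x⟩ ⟨i, z⟩ =
          prod.map (vdescMap F s ⟨i, y⟩ ⟨i, z⟩) (vdescMap F s ⟨i, x⟩ ⟨i, y⟩) ≫
            s.pt.comp _ _ _
        rw [sComp_same]
        simp only [vdescMap_same]
        simp only [Category.assoc, eqToHom_trans, eqToHom_trans_assoc, eqToHom_self,
          eqToHom_refl, Category.id_comp]
        rw [(s.ι.app ⟨i⟩).map_comp x y z, ← Category.assoc, prod.map_map]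
        rfl
      · exact sH_ext_l (fun i => (F.obj ⟨i⟩).obj) (fun i => (F.obj ⟨i⟩).hom) h2 _ _
    · exact sH_ext_r (fun i => (F.obj ⟨i⟩).obj) (fun i => (F.obj ⟨i⟩).hom) h1 _ _

noncomputable def vIsColimit : IsColimit (vCocone F) where
  desc s := vdesc F s
  fac s := by
    rintro ⟨i⟩
    refine VCat.Hom.ext' rfl (heq_of_eq ?_)
    funext x y
    show eqToHom (sH_same (fun i => (F.obj ⟨i⟩).obj)
        (fun i => (F.obj ⟨i⟩).hom) i x y).symm ≫ vdescMap F s ⟨i, x⟩ ⟨i, y⟩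
      = (s.ι.app ⟨i⟩).map x y
    rw [vdescMap_same]
    simp
  uniq s m w := by
    obtain ⟨mo, mm, me, mc⟩ := m
    have hobj : mo = fun a : Σ i, (F.obj ⟨i⟩).obj => (s.ι.app ⟨a.1⟩).obj a.2 := by
      funext a; obtain ⟨i, x⟩ := a
      exact congrFun (congrArg VCat.Hom.obj (w ⟨i⟩)) x
    subst hobj
    refine VCat.Hom.ext' rfl (heq_of_eq ?_)
    funext a b
    obtain ⟨i, x⟩ := a; obtain ⟨j, y⟩ := b
    by_cases h : i = j
    · subst h
      have hc : eqToHom (sH_same (fun i => (F.obj ⟨i⟩).obj)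
            (fun i => (F.obj ⟨i⟩).hom) i x y).symm ≫ mm ⟨i, x⟩ ⟨i, y⟩
          = (s.ι.app ⟨i⟩).map x y ≫
            eqToHom (vdescCast F s (a := ⟨i, x⟩) (b := ⟨i, y⟩) rfl) :=
        VCat.hom_congr (w ⟨i⟩) x y
      show mm ⟨i, x⟩ ⟨i, y⟩ = vdescMap F s ⟨i, x⟩ ⟨i, y⟩
      rw [vdescMap_same]
      have h2 : mm ⟨i, x⟩ ⟨i, y⟩ =
          eqToHom (sH_same (fun i => (F.obj ⟨i⟩).obj) (fun i => (F.obj ⟨i⟩).hom) i x y) ≫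
            eqToHom (sH_same (fun i => (F.obj ⟨i⟩).obj)
              (fun i => (F.obj ⟨i⟩).hom) i x y).symm ≫ mm ⟨i, x⟩ ⟨i, y⟩ := by
          exact (by intro A B Z p f; subst p; simp : ∀ {A B Z : V} (p : A = B) (f : A ⟶ Z),
            f = eqToHom p ≫ eqToHom p.symm ≫ f) _ _
      rw [h2, hc, show eqToHom (vdescCast F s (a := ⟨i, x⟩) (b := ⟨i, y⟩) rfl) = 𝟙 _ from rfl]
      simp
      rfl
    · exact sH_ext (fun i => (F.obj ⟨i⟩).obj) (fun i => (F.obj ⟨i⟩).hom) h _ _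

end Desc

end Cat

end CoprodConstruction

/-- if `V` has a strict initial object and finite products, then
`V`-Gph and `V`-Cat admit all small coproducts and the forgetful functor
`U : V-Cat ⥤ V-Gph` preserves small coproducts. -/
theorem coproducts_vGraph_vCat_and_forget_preserves
    (V : Type u) [Category.{v} V] [HasFiniteProducts V]
    [HasInitial V] [HasStrictInitialObjects V] :
    HasCoproducts.{v} (VGraph V) ∧ HasCoproducts.{v} (VCat V) ∧
      ∀ (I : Type v) (X : I → VCat V) (c : Cocone (Discrete.functor X)),
        Nonempty (IsColimit c) →
          Nonempty (IsColimit ((VCat.forgetToGraph V).mapCocone c)) := by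
  refine ⟨fun I => ⟨fun F => HasColimit.mk ⟨gCocone F, gIsColimit F⟩⟩,
    fun I => ⟨fun F => HasColimit.mk ⟨vCocone F, vIsColimit F⟩⟩, ?_⟩
  rintro I X c ⟨hc⟩
  have hcc := vIsColimit (Discrete.functor X)
  have hmap : IsColimit ((VCat.forgetToGraph V).mapCocone (vCocone (Discrete.functor X))) := by
    refine (gIsColimit (Discrete.functor X ⋙ VCat.forgetToGraph V)).ofIsoColimit ?_
    refine Cocones.ext (Iso.refl _) ?_
    rintro ⟨i⟩
    exact (Category.comp_id _).trans rfl
  exact ⟨hmap.ofIsoColimit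
    ((Cocones.functoriality (Discrete.functor X) (VCat.forgetToGraph V)).mapIso
      (hcc.uniqueUpToIso hc))⟩
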